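/- arXiv:math/0410279 — 2 statements merged into one kernel-verified Lean document; each statement's English description precedes it below -/
import Mathlib

section
/- Let c be a classical solution of the convection–dispersion equation on [0, ℓ], and suppose c satisfies a third-type (Robin) entrance condition v·c_in(t) = v·c(t,0) − D·∂x c(t,0) and a third-type exit condition v·c_eff(t) = v·c(t,ℓ) − D·∂x c(t,ℓ) for all t, where c_in, c_eff : ℝ → ℝ are the influent and effluent concentrations. Then the overall conservation law holds: for every t, d/dt ∫₀^ℓ c(t,x) dx = v·c_in(t) − v·c_eff(t) + ∫₀^ℓ r(t,x) dx. In particular, third-type boundaries are a sufficient condition for overall mass conservation, independently of the fate term r. -/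
open Set

/-- `c` is a classical solution of the convection–dispersion equation
`∂t c = D·∂xx c − v·∂x c + r` on the column `[0, ℓ]`, where `ct`, `cx`, `cxx`
denote the partial derivatives `∂t c`, `∂x c`, `∂xx c` (one-sided in the
space variable at the endpoints), and these together with `r` are continuous
on `ℝ × [0, ℓ]`. -/
structure IsCDESolution (D v ℓ : ℝ) (c ct cx cxx r : ℝ → ℝ → ℝ) : Prop where
  hasDeriv_x : ∀ t : ℝ, ∀ x ∈ Icc (0:ℝ) ℓ, HasDerivWithinAt (c t) (cx t x) (Icc 0 ℓ) x
  hasDeriv_xx : ∀ t : ℝ, ∀ x ∈ Icc (0:ℝ) ℓ, HasDerivWithinAt (cx t) (cxx t x) (Icc 0 ℓ) x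
  hasDeriv_t : ∀ x ∈ Icc (0:ℝ) ℓ, ∀ t : ℝ, HasDerivAt (fun s => c s x) (ct t x) t
  cont_ct : ContinuousOn (Function.uncurry ct) (univ ×ˢ Icc 0 ℓ)
  cont_cx : ContinuousOn (Function.uncurry cx) (univ ×ˢ Icc 0 ℓ)
  cont_cxx : ContinuousOn (Function.uncurry cxx) (univ ×ˢ Icc 0 ℓ)
  cont_r : ContinuousOn (Function.uncurry r) (univ ×ˢ Icc 0 ℓ)
  pde : ∀ t : ℝ, ∀ x ∈ Icc (0:ℝ) ℓ, ct t x = D * cxx t x - v * cx t x + r t x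

/-!
Integrating the equation over the column, the dispersive and convective terms are exact
derivatives in `x`, so by the fundamental theorem of calculus their integrals reduce to the
boundary fluxes `v·c − D·∂x c` at `x = 0` and `x = ℓ`; the third-type conditions say precisely
that these fluxes are `v·c_in` and `v·c_eff`. Differentiating `∫₀^ℓ c(t,x) dx` under the integral
sign is justified by dominated convergence, `∂t c` being bounded on compact rectangles.
-/

open Function MeasureTheory
open scoped Interval

section Calculus

variable {E : Type*} [NormedAddCommGroup E] [NormedSpace ℝ E] {a b : ℝ}

theorem integral_eq_sub_of_hasDerivWithinAt_Icc [CompleteSpace E] {f f' : ℝ → E} (hab : a ≤ b)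
    (hderiv : ∀ x ∈ Icc a b, HasDerivWithinAt f (f' x) (Icc a b) x)
    (hf' : ContinuousOn f' (Icc a b)) :
    ∫ x in a..b, f' x = f b - f a :=
  intervalIntegral.integral_eq_sub_of_hasDerivAt_of_le hab
    (fun x hx => (hderiv x hx).continuousWithinAt)
    (fun x hx => (hderiv x (Ioo_subset_Icc_self hx)).hasDerivAt (Icc_mem_nhds hx.1 hx.2))
    (hf'.intervalIntegrable_of_Icc hab)

theorem hasDerivAt_intervalIntegral_of_continuousOn {F F' : ℝ → ℝ → E} (hab : a ≤ b)
    (hF : ∀ s, ContinuousOn (F s) (Icc a b))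
    (hF' : ContinuousOn (uncurry F') (univ ×ˢ Icc a b))
    (hderiv : ∀ x ∈ Icc a b, ∀ s, HasDerivAt (F · x) (F' s x) s) (t : ℝ) :
    HasDerivAt (fun s => ∫ x in a..b, F s x) (∫ x in a..b, F' t x) t := by
  have hIoc : Ι a b ⊆ Icc a b := by
    rw [uIoc_of_le hab]
    exact Ioc_subset_Icc_self
  obtain ⟨M, hM⟩ : ∃ M, ∀ p ∈ Icc (t - 1) (t + 1) ×ˢ Icc a b, ‖uncurry F' p‖ ≤ M :=
    (isCompact_Icc.prod isCompact_Icc).exists_bound_of_continuousOn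
      (hF'.mono (prod_mono_left (subset_univ _)))
  have hbound : ∀ x ∈ Ι a b, ∀ s ∈ Metric.ball t 1, ‖F' s x‖ ≤ M := by
    intro x hx s hs
    rw [Real.ball_eq_Ioo] at hs
    exact hM (s, x) ⟨Ioo_subset_Icc_self hs, hIoc hx⟩
  refine (intervalIntegral.hasDerivAt_integral_of_dominated_loc_of_deriv_le
    (Metric.ball_mem_nhds t one_pos)
    (.of_forall fun s => ((hF s).mono hIoc).aestronglyMeasurable measurableSet_uIoc)
    ((hF t).intervalIntegrable_of_Icc hab)
    (((hF'.uncurry_left t (mem_univ t)).mono hIoc).aestronglyMeasurable measurableSet_uIoc)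
    (.of_forall hbound) intervalIntegrable_const
    (.of_forall fun x hx s _ => hderiv x (hIoc hx) s)).2

end Calculus

namespace IsCDESolution

variable {D v ℓ : ℝ} {c ct cx cxx r : ℝ → ℝ → ℝ}

theorem integral_ct_eq (hsol : IsCDESolution D v ℓ c ct cx cxx r) (hℓ : 0 ≤ ℓ) (t : ℝ) :
    ∫ x in (0:ℝ)..ℓ, ct t x =
      (v * c t 0 - D * cx t 0) - (v * c t ℓ - D * cx t ℓ) + ∫ x in (0:ℝ)..ℓ, r t x := by
  have hcx := hsol.cont_cx.uncurry_left t (mem_univ t)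
  have hcxx := hsol.cont_cxx.uncurry_left t (mem_univ t)
  have hr := hsol.cont_r.uncurry_left t (mem_univ t)
  have hcx_int : IntervalIntegrable (cx t) volume 0 ℓ := hcx.intervalIntegrable_of_Icc hℓ
  have hcxx_int : IntervalIntegrable (cxx t) volume 0 ℓ := hcxx.intervalIntegrable_of_Icc hℓ
  have hdisp : ∫ x in (0:ℝ)..ℓ, cxx t x = cx t ℓ - cx t 0 :=
    integral_eq_sub_of_hasDerivWithinAt_Icc hℓ (hsol.hasDeriv_xx t) hcxx
  have hconv : ∫ x in (0:ℝ)..ℓ, cx t x = c t ℓ - c t 0 :=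
    integral_eq_sub_of_hasDerivWithinAt_Icc hℓ (hsol.hasDeriv_x t) hcx
  have hpde : ∫ x in (0:ℝ)..ℓ, ct t x = ∫ x in (0:ℝ)..ℓ, (D * cxx t x - v * cx t x + r t x) :=
    intervalIntegral.integral_congr fun x hx => hsol.pde t x (uIcc_of_le hℓ ▸ hx)
  rw [hpde, intervalIntegral.integral_add ((hcxx_int.const_mul D).sub (hcx_int.const_mul v))
      (hr.intervalIntegrable_of_Icc hℓ),
    intervalIntegral.integral_sub (hcxx_int.const_mul D) (hcx_int.const_mul v),
    intervalIntegral.integral_const_mul, intervalIntegral.integral_const_mul, hdisp, hconv]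
  ring

theorem hasDerivAt_integral (hsol : IsCDESolution D v ℓ c ct cx cxx r) (hℓ : 0 ≤ ℓ) (t : ℝ) :
    HasDerivAt (fun s => ∫ x in (0:ℝ)..ℓ, c s x) (∫ x in (0:ℝ)..ℓ, ct t x) t :=
  hasDerivAt_intervalIntegral_of_continuousOn hℓ
    (fun s x hx => (hsol.hasDeriv_x s x hx).continuousWithinAt) hsol.cont_ct hsol.hasDeriv_t t

end IsCDESolution

theorem cde_third_type_boundaries_imply_mass_conservation_general
    (D v ℓ : ℝ) (hℓ : 0 < ℓ)
    (c ct cx cxx r : ℝ → ℝ → ℝ) (cin ceff : ℝ → ℝ)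
    (hsol : IsCDESolution D v ℓ c ct cx cxx r)
    (hin : ∀ t : ℝ, v * cin t = v * c t 0 - D * cx t 0)
    (hout : ∀ t : ℝ, v * ceff t = v * c t ℓ - D * cx t ℓ) :
    ∀ t : ℝ,
      HasDerivAt (fun s : ℝ => ∫ x in (0:ℝ)..ℓ, c s x)
        (v * cin t - v * ceff t + ∫ x in (0:ℝ)..ℓ, r t x) t := by
  intro t
  rw [hin, hout, ← hsol.integral_ct_eq hℓ.le]
  exact hsol.hasDerivAt_integral hℓ.le t

/-- Third-type (Robin) boundaries at both the entrance and the exit are a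
sufficient condition for the overall conservation law
`d/dt ∫₀^ℓ c(t,x) dx = v·c_in(t) − v·c_eff(t) + ∫₀^ℓ r(t,x) dx`,
independently of the fate term `r`. -/
theorem cde_third_type_boundaries_imply_mass_conservation
    (D v ℓ : ℝ) (hD : 0 < D) (hv : 0 < v) (hℓ : 0 < ℓ)
    (c ct cx cxx r : ℝ → ℝ → ℝ) (cin ceff : ℝ → ℝ)
    (hsol : IsCDESolution D v ℓ c ct cx cxx r)
    (hin : ∀ t : ℝ, v * cin t = v * c t 0 - D * cx t 0)
    (hout : ∀ t : ℝ, v * ceff t = v * c t ℓ - D * cx t ℓ) :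
    ∀ t : ℝ,
      HasDerivAt (fun s : ℝ => ∫ x in (0:ℝ)..ℓ, c s x)
        (v * cin t - v * ceff t + ∫ x in (0:ℝ)..ℓ, r t x) t :=
  cde_third_type_boundaries_imply_mass_conservation_general D v ℓ hℓ c ct cx cxx r cin ceff hsol hin
    hout
end

section
/- Let c be a classical solution of the convection–dispersion equation on [0, ℓ] and let c_in : ℝ → ℝ. Suppose the entrance mass balance holds on every sub-column adjacent to the inlet: for every a ∈ (0, ℓ] and every t, d/dt ∫₀^a c(t,x) dx = v·c_in(t) − (v·c(t,a) − D·∂x c(t,a)) + ∫₀^a r(t,x) dx. Then the third-type entrance condition holds: v·c_in(t) = v·c(t,0) − D·∂x c(t,0) for all t. In other words, a third-type entrance is a necessary condition of the conservation law. -/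
/-!
The mass balance on `[0, a]` says that `φ(a) = v·c_in(t) − (v·c(t,a) − D·∂x c(t,a)) + ∫₀^a r(t,x) dx`
is the time derivative of the mass `∫₀^a c(s,x) dx` at `s = t`. Since `∂t c` is bounded near
`{t} × [0, ℓ]`, the mass is Lipschitz in time with constant `O(a)`, so `φ(a) = O(a)`. Letting
`a → 0⁺`, continuity of `c`, `∂x c` and `r` turns `φ(a) → 0` into the third-type entrance condition.
-/

open Set

open Filter Topology MeasureTheory Interval

theorem norm_intervalIntegral_sub_le_of_norm_hasDerivWithinAt_le
    {E : Type*} [NormedAddCommGroup E] [NormedSpace ℝ E]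
    {f f' : ℝ → ℝ → E} {S : Set ℝ} {a b M s t : ℝ} (hS : Convex ℝ S)
    (hf : ∀ x ∈ Ι a b, ∀ u ∈ S, HasDerivWithinAt (f · x) (f' u x) S u)
    (hf' : ∀ x ∈ Ι a b, ∀ u ∈ S, ‖f' u x‖ ≤ M)
    (hs_int : IntervalIntegrable (f s) volume a b) (ht_int : IntervalIntegrable (f t) volume a b)
    (hs : s ∈ S) (ht : t ∈ S) :
    ‖(∫ x in a..b, f s x) - ∫ x in a..b, f t x‖ ≤ M * ‖s - t‖ * |b - a| := by
  rw [← intervalIntegral.integral_sub hs_int ht_int]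
  exact intervalIntegral.norm_integral_le_of_norm_le_const fun x hx =>
    hS.norm_image_sub_le_of_norm_hasDerivWithin_le (hf x hx) (hf' x hx) ht hs

theorem ContinuousOn.tendsto_intervalIntegral_nhdsGT
    {E : Type*} [NormedAddCommGroup E] [NormedSpace ℝ E] {f : ℝ → E} {a b : ℝ}
    (hab : a < b) (hf : ContinuousOn f (Icc a b)) :
    Tendsto (fun u => ∫ x in a..u, f x) (𝓝[>] a) (𝓝 0) := by
  have hprim := intervalIntegral.continuousOn_primitive_interval (μ := volume)
    (hf.integrableOn_Icc.mono_set (uIcc_of_le hab.le).subset)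
  rw [uIcc_of_le hab.le] at hprim
  simpa using ((hprim a (left_mem_Icc.2 hab.le)).mono_of_mem_nhdsWithin
    (mem_of_superset (Ioc_mem_nhdsGT hab) Ioc_subset_Icc_self)).tendsto

namespace IsCDESolution

variable {D v ℓ : ℝ} {c ct cx cxx r : ℝ → ℝ → ℝ}

theorem continuousOn_c (h : IsCDESolution D v ℓ c ct cx cxx r) (t : ℝ) :
    ContinuousOn (c t) (Icc 0 ℓ) :=
  fun x hx => (h.hasDeriv_x t x hx).continuousWithinAt

theorem continuousOn_cx (h : IsCDESolution D v ℓ c ct cx cxx r) (t : ℝ) :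
    ContinuousOn (cx t) (Icc 0 ℓ) :=
  fun x hx => (h.hasDeriv_xx t x hx).continuousWithinAt

theorem continuousOn_r (h : IsCDESolution D v ℓ c ct cx cxx r) (t : ℝ) :
    ContinuousOn (r t) (Icc 0 ℓ) :=
  h.cont_r.comp (Continuous.prodMk_right t).continuousOn fun _ hx => ⟨trivial, hx⟩

theorem exists_abs_le_of_hasDerivAt_integral (h : IsCDESolution D v ℓ c ct cx cxx r) (t : ℝ) :
    ∃ M, ∀ a ∈ Ioc 0 ℓ, ∀ m : ℝ, HasDerivAt (fun s => ∫ x in (0:ℝ)..a, c s x) m t →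
      |m| ≤ M * a := by
  obtain ⟨M, hM⟩ := (isCompact_Icc.prod isCompact_Icc :
      IsCompact (Icc (t - 1) (t + 1) ×ˢ Icc (0:ℝ) ℓ)).exists_bound_of_continuousOn
    (h.cont_ct.mono fun p hp => ⟨trivial, hp.2⟩)
  refine ⟨M, fun a ha m hm => ?_⟩
  have ht : t ∈ Icc (t - 1) (t + 1) := ⟨by linarith, by linarith⟩
  have hM0 : 0 ≤ M := (norm_nonneg _).trans (hM (t, 0) ⟨ht, le_rfl, ha.1.le.trans ha.2⟩)
  have hIcc : uIcc 0 a ⊆ Icc 0 ℓ := by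
    rw [uIcc_of_le ha.1.le]; exact Icc_subset_Icc_right ha.2
  have hIoc : Ι 0 a ⊆ Icc 0 ℓ := uIoc_subset_uIcc.trans hIcc
  have hint (s : ℝ) : IntervalIntegrable (c s) volume 0 a :=
    ((h.continuousOn_c s).mono hIcc).intervalIntegrable
  refine hm.le_of_lip' (mul_nonneg hM0 ha.1.le) ?_
  filter_upwards [Icc_mem_nhds (by linarith : t - 1 < t) (by linarith : t < t + 1)] with s hs
  calc ‖(∫ x in (0:ℝ)..a, c s x) - ∫ x in (0:ℝ)..a, c t x‖
      ≤ M * ‖s - t‖ * |a - 0| :=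
        norm_intervalIntegral_sub_le_of_norm_hasDerivWithinAt_le (convex_Icc _ _)
          (fun x hx u _ => (h.hasDeriv_t x (hIoc hx) u).hasDerivWithinAt)
          (fun x hx u hu => hM (u, x) ⟨hu, hIoc hx⟩) (hint s) (hint t) hs ht
    _ = M * a * ‖s - t‖ := by rw [sub_zero, abs_of_pos ha.1]; ring

end IsCDESolution

theorem cde_third_type_entrance_necessary_general
    (D v ℓ : ℝ) (hℓ : 0 < ℓ)
    (c ct cx cxx r : ℝ → ℝ → ℝ) (cin : ℝ → ℝ)
    (hsol : IsCDESolution D v ℓ c ct cx cxx r)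
    (hbal : ∀ a ∈ Ioc (0:ℝ) ℓ, ∀ t : ℝ,
      HasDerivAt (fun s : ℝ => ∫ x in (0:ℝ)..a, c s x)
        (v * cin t - (v * c t a - D * cx t a) + ∫ x in (0:ℝ)..a, r t x) t) :
    ∀ t : ℝ, v * cin t = v * c t 0 - D * cx t 0 := by
  intro t
  set φ : ℝ → ℝ := fun a => v * cin t - (v * c t a - D * cx t a) + ∫ x in (0:ℝ)..a, r t x
  obtain ⟨M, hM⟩ := hsol.exists_abs_le_of_hasDerivAt_integral t
  have hφ_zero : Tendsto φ (𝓝[>] 0) (𝓝 0) := by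
    refine squeeze_zero_norm' ?_ (tendsto_nhdsWithin_of_tendsto_nhds
      (by simpa using (continuous_const_mul M).tendsto 0))
    filter_upwards [Ioc_mem_nhdsGT hℓ] with a ha using hM a ha _ (hbal a ha t)
  have hIcc : Icc 0 ℓ ∈ 𝓝[>] (0:ℝ) := mem_of_superset (Ioc_mem_nhdsGT hℓ) Ioc_subset_Icc_self
  have h0 : (0:ℝ) ∈ Icc 0 ℓ := left_mem_Icc.2 hℓ.le
  have hc := ((hsol.continuousOn_c t 0 h0).mono_of_mem_nhdsWithin hIcc).tendsto
  have hcx := ((hsol.continuousOn_cx t 0 h0).mono_of_mem_nhdsWithin hIcc).tendsto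
  have hφ_lim : Tendsto φ (𝓝[>] 0) (𝓝 (v * cin t - (v * c t 0 - D * cx t 0) + 0)) :=
    (tendsto_const_nhds.sub ((hc.const_mul v).sub (hcx.const_mul D))).add
      ((hsol.continuousOn_r t).tendsto_intervalIntegral_nhdsGT hℓ)
  linarith [tendsto_nhds_unique hφ_lim hφ_zero]

/-- A third-type entrance is a necessary condition of the conservation law:
if the mass balance with influent flux `v·c_in(t)` holds on every sub-column
`[0, a]` adjacent to the inlet, then `v·c_in(t) = v·c(t,0) − D·∂x c(t,0)`
for all `t`. -/
theorem cde_third_type_entrance_necessary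
    (D v ℓ : ℝ) (hD : 0 < D) (hv : 0 < v) (hℓ : 0 < ℓ)
    (c ct cx cxx r : ℝ → ℝ → ℝ) (cin : ℝ → ℝ)
    (hsol : IsCDESolution D v ℓ c ct cx cxx r)
    (hbal : ∀ a ∈ Ioc (0:ℝ) ℓ, ∀ t : ℝ,
      HasDerivAt (fun s : ℝ => ∫ x in (0:ℝ)..a, c s x)
        (v * cin t - (v * c t a - D * cx t a) + ∫ x in (0:ℝ)..a, r t x) t) :
    ∀ t : ℝ, v * cin t = v * c t 0 - D * cx t 0 :=
  cde_third_type_entrance_necessary_general D v ℓ hℓ c ct cx cxx r cin hsol hbal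
end
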